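/- arXiv:2003.04999 — 5 statements merged into one kernel-verified Lean document; each statement's English description precedes it below -/
import Mathlib

section
/- Assume a₁ > 0 and σ > −1 + 2/n (case (i), so that T₁ = ∞ and A(t) > 0, (d/dt)A(t) < 0 on [0,∞)). Then for any Y₀, Y₁ ∈ ℝⁿ there exist T > 0, R > 0 and a function Y ∈ C¹([0,T)) with ‖Y‖_{X(T)} ≤ R which solves the Cauchy problem (CY): D_t²Y(t) + A(t)Y(t) + λ|Y(t)|^{p−1}Y(t) = 0 on [0,T), Y(0) = Y₀, D_tY(0) = Y₁. -/
/-!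
In case (i) the base `1 + n(1+σ)a₁t/(2a₀)` of the power defining `a(t)` is positive on
`[0, ∞)`, so there `A(t) = (n(1+σ)/2 - 1)(a₁/a₀)² / (1 + n(1+σ)a₁t/(2a₀))²` is `C¹`.
Written as a first-order system for `(Y, D_tY)`, the equation has a nonlinearity
`|Y|^{p-1}Y` that is Lipschitz on bounded sets (by Bernoulli's inequality,
`(x^q - y^q) y ≤ q x^q (x - y)` for `0 ≤ y ≤ x`), so the Picard–Lindelöf theorem gives a
solution on some `[0, T]`. Its `X(T)`-norm is finite since every term is continuous on the
compact interval `[0, T]`.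
-/

open MeasureTheory Set

/-- The scale function `a(t)` of the homogeneous and isotropic spacetime. -/
noncomputable def scaleFun (n : ℕ) (σ a₀ a₁ : ℝ) (t : ℝ) : ℝ :=
  if σ = -1 then a₀ * Real.exp (a₁ * t / a₀)
  else a₀ * (1 + (n : ℝ) * (1 + σ) * a₁ * t / (2 * a₀)) ^ (2 / ((n : ℝ) * (1 + σ)))

/-- `q₀(t) = (d/dt)(a(t)²) / a(t)²`. -/
noncomputable def q0Fun (n : ℕ) (σ a₀ a₁ : ℝ) (t : ℝ) : ℝ :=
  deriv (fun s => (scaleFun n σ a₀ a₁ s) ^ 2) t / (scaleFun n σ a₀ a₁ t) ^ 2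

/-- `A(t) = -q₀(t)²/4 - (1/2) (d/dt) q₀(t)`. -/
noncomputable def AFun (n : ℕ) (σ a₀ a₁ : ℝ) (t : ℝ) : ℝ :=
  -(q0Fun n σ a₀ a₁ t) ^ 2 / 4 - (1 / 2) * deriv (q0Fun n σ a₀ a₁) t

open Metric
open scoped NNReal ENNReal

lemma rpow_sub_rpow_mul_le {q x y : ℝ} (hq : 0 < q) (hy : 0 ≤ y) (hyx : y ≤ x) :
    (x ^ q - y ^ q) * y ≤ q * x ^ q * (x - y) := by
  rcases hy.eq_or_lt with rfl | hy
  · simp only [mul_zero, sub_zero]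
    exact mul_nonneg (mul_nonneg hq.le (Real.rpow_nonneg hyx q)) hyx
  have hx : 0 < x := hy.trans_le hyx
  have bernoulli := one_add_mul_self_le_rpow_one_add (s := y / x - 1) (p := q + 1)
    (by linarith [div_nonneg hy.le hx.le]) (by linarith)
  rw [add_sub_cancel, Real.div_rpow hy.le hx.le, Real.rpow_add_one hy.ne',
    Real.rpow_add_one hx.ne', le_div_iff₀ (by positivity)] at bernoulli
  have hxq : 0 < x ^ q := Real.rpow_pos_of_pos hx q
  field_simp at bernoulli
  nlinarith

lemma norm_rpow_smul_sub_rpow_smul_le {E : Type*} [NormedAddCommGroup E] [NormedSpace ℝ E]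
    {q M : ℝ} (hq : 0 < q) {a b : E} (ha : ‖a‖ ≤ M) (hb : ‖b‖ ≤ M) :
    ‖‖a‖ ^ q • a - ‖b‖ ^ q • b‖ ≤ (1 + q) * M ^ q * ‖a - b‖ := by
  wlog hba : ‖b‖ ≤ ‖a‖ generalizing a b
  · rw [norm_sub_rev, norm_sub_rev a]
    exact this hb ha (le_of_not_ge hba)
  have hdec : ‖a‖ ^ q • a - ‖b‖ ^ q • b = ‖a‖ ^ q • (a - b) + (‖a‖ ^ q - ‖b‖ ^ q) • b := by
    rw [smul_sub, sub_smul]; abel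
  have hqba : ‖b‖ ^ q ≤ ‖a‖ ^ q := Real.rpow_le_rpow (norm_nonneg b) hba hq.le
  calc ‖‖a‖ ^ q • a - ‖b‖ ^ q • b‖
      ≤ ‖a‖ ^ q * ‖a - b‖ + (‖a‖ ^ q - ‖b‖ ^ q) * ‖b‖ := by
        rw [hdec]
        refine (norm_add_le _ _).trans_eq ?_
        rw [norm_smul, norm_smul, Real.norm_of_nonneg (by positivity),
          Real.norm_of_nonneg (sub_nonneg.2 hqba)]
    _ ≤ ‖a‖ ^ q * ‖a - b‖ + q * ‖a‖ ^ q * ‖a - b‖ := by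
        refine add_le_add le_rfl ((rpow_sub_rpow_mul_le hq (norm_nonneg b) hba).trans ?_)
        exact mul_le_mul_of_nonneg_left (norm_sub_norm_le a b) (by positivity)
    _ = (1 + q) * ‖a‖ ^ q * ‖a - b‖ := by ring
    _ ≤ (1 + q) * M ^ q * ‖a - b‖ := by gcongr

theorem exists_forall_mem_Icc_hasDerivWithinAt_of_lipschitzOnWith {F : Type*}
    [NormedAddCommGroup F] [NormedSpace ℝ F] [CompleteSpace F] {f : ℝ → F → F} {x₀ : F}
    {τ : ℝ} {L K : ℝ≥0} (hτ : 0 < τ)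
    (hlip : ∀ t ∈ Icc 0 τ, LipschitzOnWith K (f t) (closedBall x₀ 1))
    (hcont : ∀ x ∈ closedBall x₀ 1, ContinuousOn (f · x) (Icc 0 τ))
    (hbound : ∀ t ∈ Icc 0 τ, ∀ x ∈ closedBall x₀ 1, ‖f t x‖ ≤ L) :
    ∃ T > 0, ∃ α : ℝ → F, α 0 = x₀ ∧
      ∀ t ∈ Icc 0 T, HasDerivWithinAt α (f t (α t)) (Icc 0 T) t := by
  set T := min τ (1 / (L + 1))
  have hT : 0 < T := lt_min hτ (by positivity)
  have hTτ : Icc 0 T ⊆ Icc 0 τ := Icc_subset_Icc_right (min_le_left _ _)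
  have hPL : IsPicardLindelof f (tmin := 0) (tmax := T) ⟨0, le_rfl, hT.le⟩ x₀ 1 0 L K := by
    refine ⟨fun t ht => hlip t (hTτ ht), fun x hx => (hcont x hx).mono hTτ,
      fun t ht => hbound t (hTτ ht), ?_⟩
    suffices (L : ℝ) * T ≤ 1 by simpa [hT.le] using this
    calc (L : ℝ) * T ≤ L * (1 / (L + 1)) := by gcongr; exact min_le_right _ _
      _ ≤ 1 := by rw [mul_one_div, div_le_one (by positivity)]; linarith
  exact ⟨T, hT, hPL.exists_eq_forall_mem_Icc_hasDerivWithinAt₀⟩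

section Oscillator

variable {E : Type*} [NormedAddCommGroup E] [NormedSpace ℝ E]

noncomputable def oscillatorField (a : ℝ → ℝ) (lam q t : ℝ) (x : E × E) : E × E :=
  (x.2, -(a t • x.1) - (lam * ‖x.1‖ ^ q) • x.1)

lemma oscillatorField_zero {a : ℝ → ℝ} {lam q : ℝ} (hq : q ≠ 0) (t : ℝ) :
    oscillatorField a lam q t (0 : E × E) = 0 := by
  simp [oscillatorField, Real.zero_rpow hq]

lemma lipschitzOnWith_oscillatorField {a : ℝ → ℝ} {lam q K M t : ℝ} (hq : 0 < q)
    (hK : |a t| ≤ K) :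
    LipschitzOnWith (1 + K + |lam| * ((1 + q) * M ^ q)).toNNReal
      (oscillatorField a lam q t) (closedBall (0 : E × E) M) := by
  rw [lipschitzOnWith_iff_norm_sub_le]
  intro x hx y hy
  rw [mem_closedBall_zero_iff] at hx hy
  have hM : 0 ≤ M := (norm_nonneg x).trans hx
  have hL : 1 ≤ 1 + K + |lam| * ((1 + q) * M ^ q) := by
    have : 0 ≤ |lam| * ((1 + q) * M ^ q) := by positivity
    linarith [(abs_nonneg (a t)).trans hK]
  rw [Real.coe_toNNReal _ (by linarith)]
  have hdiff : oscillatorField a lam q t x - oscillatorField a lam q t y =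
      (x.2 - y.2, -(a t • (x.1 - y.1)) - lam • (‖x.1‖ ^ q • x.1 - ‖y.1‖ ^ q • y.1)) := by
    simp only [oscillatorField, Prod.mk_sub_mk, smul_sub, mul_smul]
    congr 1
    abel
  rw [hdiff, norm_prod_le_iff]
  constructor
  · calc ‖x.2 - y.2‖ ≤ ‖x - y‖ := norm_snd_le (x - y)
      _ ≤ _ := le_mul_of_one_le_left (norm_nonneg _) hL
  · calc ‖-(a t • (x.1 - y.1)) - lam • (‖x.1‖ ^ q • x.1 - ‖y.1‖ ^ q • y.1)‖
        ≤ |a t| * ‖x.1 - y.1‖ + |lam| * ((1 + q) * M ^ q * ‖x.1 - y.1‖) := by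
          refine (norm_sub_le _ _).trans ?_
          rw [norm_neg, norm_smul, norm_smul, Real.norm_eq_abs, Real.norm_eq_abs]
          gcongr
          exact norm_rpow_smul_sub_rpow_smul_le hq ((norm_fst_le x).trans hx)
            ((norm_fst_le y).trans hy)
      _ = (|a t| + |lam| * ((1 + q) * M ^ q)) * ‖x.1 - y.1‖ := by ring
      _ ≤ (1 + K + |lam| * ((1 + q) * M ^ q)) * ‖x - y‖ := by
          gcongr
          · linarith
          · exact norm_fst_le (x - y)

theorem exists_hasDerivWithinAt_oscillatorField [CompleteSpace E] {a : ℝ → ℝ} {lam q τ : ℝ}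
    (hq : 0 < q) (hτ : 0 < τ) (ha : ContinuousOn a (Icc 0 τ)) (x₀ : E × E) :
    ∃ T > 0, ∃ α : ℝ → E × E, α 0 = x₀ ∧
      ∀ t ∈ Icc 0 T, HasDerivWithinAt α (oscillatorField a lam q t (α t)) (Icc 0 T) t := by
  obtain ⟨K, hK⟩ := isCompact_Icc.exists_bound_of_continuousOn ha
  set M := ‖x₀‖ + 1
  set L := 1 + K + |lam| * ((1 + q) * M ^ q)
  have hball : closedBall x₀ 1 ⊆ closedBall 0 M :=
    closedBall_subset_closedBall' (by simp [M, add_comm])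
  have hL : 0 ≤ L := by
    have := (norm_nonneg _).trans (hK 0 (left_mem_Icc.2 hτ.le))
    positivity
  have hlip : ∀ t ∈ Icc 0 τ, LipschitzOnWith L.toNNReal (oscillatorField a lam q t)
      (closedBall (0 : E × E) M) := fun t ht => lipschitzOnWith_oscillatorField hq (hK t ht)
  refine exists_forall_mem_Icc_hasDerivWithinAt_of_lipschitzOnWith (L := (L * M).toNNReal) hτ
    (fun t ht => (hlip t ht).mono hball) (fun x _ => ?_) (fun t ht x hx => ?_)
  · unfold oscillatorField
    fun_prop
  · -- the field vanishes at `0`, so its Lipschitz bound also bounds its size on the ball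
    have := (hlip t ht).norm_sub_le (hball hx)
      (mem_closedBall_self (by positivity : 0 ≤ M))
    rw [oscillatorField_zero hq.ne', sub_zero, sub_zero, Real.coe_toNNReal _ hL] at this
    rw [Real.coe_toNNReal _ (by positivity)]
    exact this.trans (mul_le_mul_of_nonneg_left (mem_closedBall_zero_iff.1 (hball hx)) hL)

end Oscillator

lemma hasDerivAt_one_add_mul_div (c d t : ℝ) :
    HasDerivAt (fun s => 1 + c * s / d) (c / d) t := by
  simpa using (((hasDerivAt_id t).const_mul c).div_const d).const_add 1

def scaleDomain (n : ℕ) (σ a₀ a₁ : ℝ) : Set ℝ :=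
  {t | 0 < 1 + (n : ℝ) * (1 + σ) * a₁ * t / (2 * a₀)}

lemma isOpen_scaleDomain (n : ℕ) (σ a₀ a₁ : ℝ) : IsOpen (scaleDomain n σ a₀ a₁) :=
  isOpen_lt continuous_const (by fun_prop)

section Coefficient

variable {n : ℕ} {σ a₀ a₁ : ℝ}

lemma scaleFun_sq_eqOn (hm : (n : ℝ) * (1 + σ) ≠ 0) :
    EqOn (fun t => scaleFun n σ a₀ a₁ t ^ 2)
      (fun t => a₀ ^ 2 * (1 + (n : ℝ) * (1 + σ) * a₁ * t / (2 * a₀)) ^ (4 / ((n : ℝ) * (1 + σ))))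
      (scaleDomain n σ a₀ a₁) := by
  intro t ht
  have hσ : σ ≠ -1 := by rintro rfl; simp at hm
  simp only [scaleFun, if_neg hσ, mul_pow]
  rw [← Real.rpow_mul_natCast ht.le]
  ring_nf

lemma q0Fun_eqOn (hm : (n : ℝ) * (1 + σ) ≠ 0) (ha₀ : a₀ ≠ 0) :
    EqOn (q0Fun n σ a₀ a₁)
      (fun t => 2 * a₁ / a₀ / (1 + (n : ℝ) * (1 + σ) * a₁ * t / (2 * a₀)))
      (scaleDomain n σ a₀ a₁) := by
  intro t ht
  have hu := hasDerivAt_one_add_mul_div ((n : ℝ) * (1 + σ) * a₁) (2 * a₀) t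
  have hderiv := ((hu.rpow_const (p := 4 / ((n : ℝ) * (1 + σ))) (Or.inl ht.ne')).const_mul
    (a₀ ^ 2)).deriv
  have hsq := scaleFun_sq_eqOn hm ht
  beta_reduce at hsq ⊢
  rw [q0Fun, (scaleFun_sq_eqOn hm).deriv (isOpen_scaleDomain n σ a₀ a₁) ht, hderiv, hsq,
    Real.rpow_sub_one ht.ne']
  have hv := (Real.rpow_pos_of_pos ht (4 / ((n : ℝ) * (1 + σ)))).ne'
  generalize (1 + (n : ℝ) * (1 + σ) * a₁ * t / (2 * a₀)) ^ (4 / ((n : ℝ) * (1 + σ))) = v at hv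
  have hu0 : 1 + (n : ℝ) * (1 + σ) * a₁ * t / (2 * a₀) ≠ 0 := ne_of_gt ht
  generalize 1 + (n : ℝ) * (1 + σ) * a₁ * t / (2 * a₀) = u at hu0
  generalize (n : ℝ) * (1 + σ) = m at hm
  field_simp
  ring

lemma AFun_eqOn (hm : (n : ℝ) * (1 + σ) ≠ 0) (ha₀ : a₀ ≠ 0) :
    EqOn (AFun n σ a₀ a₁)
      (fun t => ((n : ℝ) * (1 + σ) / 2 - 1) * (a₁ / a₀) ^ 2
        / (1 + (n : ℝ) * (1 + σ) * a₁ * t / (2 * a₀)) ^ 2)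
      (scaleDomain n σ a₀ a₁) := by
  intro t ht
  have hu := hasDerivAt_one_add_mul_div ((n : ℝ) * (1 + σ) * a₁) (2 * a₀) t
  have hderiv : HasDerivAt (fun s => 2 * a₁ / a₀ / (1 + (n : ℝ) * (1 + σ) * a₁ * s / (2 * a₀)))
      _ t := (hasDerivAt_const t (2 * a₁ / a₀)).div hu ht.ne'
  have hq0 := q0Fun_eqOn hm ha₀ ht
  beta_reduce at hq0 ⊢
  rw [AFun, (q0Fun_eqOn hm ha₀).deriv (isOpen_scaleDomain n σ a₀ a₁) ht, hderiv.deriv, hq0]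
  have hu0 : 1 + (n : ℝ) * (1 + σ) * a₁ * t / (2 * a₀) ≠ 0 := ne_of_gt ht
  generalize 1 + (n : ℝ) * (1 + σ) * a₁ * t / (2 * a₀) = u at hu0
  field_simp
  ring

lemma contDiffOn_AFun (hm : (n : ℝ) * (1 + σ) ≠ 0) (ha₀ : a₀ ≠ 0) :
    ContDiffOn ℝ 1 (AFun n σ a₀ a₁) (scaleDomain n σ a₀ a₁) := by
  refine ContDiffOn.congr ?_ (AFun_eqOn hm ha₀)
  exact contDiffOn_const.div (by fun_prop) fun _ ht => pow_ne_zero 2 (ne_of_gt ht)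

end Coefficient

lemma eLpNorm_restrict_Ioo_lt_top_of_continuousOn {E : Type*} [NormedAddCommGroup E]
    {f : ℝ → E} {a b : ℝ} (hf : ContinuousOn f (Icc a b)) (p : ℝ≥0∞) :
    eLpNorm f p (volume.restrict (Ioo a b)) < ⊤ := by
  obtain ⟨C, hC⟩ := isCompact_Icc.exists_bound_of_continuousOn hf
  refine (MemLp.of_bound ((hf.mono Ioo_subset_Icc_self).aestronglyMeasurable measurableSet_Ioo)
    C ?_).eLpNorm_lt_top
  exact (ae_restrict_iff' measurableSet_Ioo).2 (ae_of_all _ fun t ht =>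
    hC t (Ioo_subset_Icc_self ht))

lemma HasDerivWithinAt.fst {E F : Type*} [NormedAddCommGroup E] [NormedSpace ℝ E]
    [NormedAddCommGroup F] [NormedSpace ℝ F] {f : ℝ → E × F} {f' : E × F} {s : Set ℝ} {t : ℝ}
    (h : HasDerivWithinAt f f' s t) : HasDerivWithinAt (fun x => (f x).1) f'.1 s t :=
  (ContinuousLinearMap.fst ℝ E F).hasFDerivAt.comp_hasDerivWithinAt t h

lemma HasDerivWithinAt.snd {E F : Type*} [NormedAddCommGroup E] [NormedSpace ℝ E]
    [NormedAddCommGroup F] [NormedSpace ℝ F] {f : ℝ → E × F} {f' : E × F} {s : Set ℝ} {t : ℝ}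
    (h : HasDerivWithinAt f f' s t) : HasDerivWithinAt (fun x => (f x).2) f'.2 s t :=
  (ContinuousLinearMap.snd ℝ E F).hasFDerivAt.comp_hasDerivWithinAt t h

section XNorm

variable {E : Type*} [NormedAddCommGroup E] [NormedSpace ℝ E]

/-- `‖Y‖_{X(T)}`, with `Y'` standing for `D_t Y`. -/
noncomputable def xNorm (A : ℝ → ℝ) (T : ℝ) (Y Y' : ℝ → E) : ℝ≥0∞ :=
  eLpNorm Y' ⊤ (volume.restrict (Ioo 0 T)) +
    eLpNorm (fun t => Real.sqrt (A t) • Y t) ⊤ (volume.restrict (Ioo 0 T)) +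
    eLpNorm (fun t => Real.sqrt (-(deriv A t)) • Y t) 2 (volume.restrict (Ioo 0 T))

lemma xNorm_lt_top {A : ℝ → ℝ} {T : ℝ} {Y Y' : ℝ → E} (hA : ContinuousOn A (Icc 0 T))
    (hA' : ContinuousOn (deriv A) (Icc 0 T)) (hY : ContinuousOn Y (Icc 0 T))
    (hY' : ContinuousOn Y' (Icc 0 T)) : xNorm A T Y Y' < ⊤ := by
  refine ENNReal.add_lt_top.2 ⟨ENNReal.add_lt_top.2 ⟨?_, ?_⟩, ?_⟩ <;>
    apply eLpNorm_restrict_Ioo_lt_top_of_continuousOn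
  · exact hY'
  · exact (Real.continuous_sqrt.comp_continuousOn hA).smul hY
  · exact (Real.continuous_sqrt.comp_continuousOn hA'.neg).smul hY

end XNorm

/-- Case (i): `a₁ > 0`, `σ > -1 + 2/n`. Local existence of a `C¹` solution of
`D_t²Y + A(t)Y + λ|Y|^{p-1}Y = 0`, `Y(0) = Y₀`, `D_tY(0) = Y₁`, with finite `X(T)`-norm
bounded by some `R`. -/
theorem stmt_0 (n : ℕ) (hn : 1 ≤ n) (σ a₀ a₁ lam p : ℝ)
    (ha₀ : 0 < a₀) (ha₁ : 0 < a₁) (hσ : -1 + 2 / (n : ℝ) < σ) (hp : 1 < p)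
    (Y₀ Y₁ : EuclideanSpace ℝ (Fin n)) :
    ∃ (T R : ℝ), 0 < T ∧ 0 < R ∧
      ∃ Y Y' : ℝ → EuclideanSpace ℝ (Fin n),
        (∀ t ∈ Ico (0 : ℝ) T, HasDerivWithinAt Y (Y' t) (Ico (0 : ℝ) T) t) ∧
        (∀ t ∈ Ico (0 : ℝ) T, HasDerivWithinAt Y'
          (-(AFun n σ a₀ a₁ t • Y t) - (lam * ‖Y t‖ ^ (p - 1)) • Y t) (Ico (0 : ℝ) T) t) ∧
        ContinuousOn Y' (Ico (0 : ℝ) T) ∧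
        Y 0 = Y₀ ∧ Y' 0 = Y₁ ∧
        eLpNorm Y' ⊤ (volume.restrict (Ioo (0 : ℝ) T)) +
          eLpNorm (fun t => Real.sqrt (AFun n σ a₀ a₁ t) • Y t) ⊤
            (volume.restrict (Ioo (0 : ℝ) T)) +
          eLpNorm (fun t => Real.sqrt (-(deriv (AFun n σ a₀ a₁) t)) • Y t) 2
            (volume.restrict (Ioo (0 : ℝ) T))
          ≤ ENNReal.ofReal R := by
  have hm : 0 < (n : ℝ) * (1 + σ) :=
    mul_pos (Nat.cast_pos.2 hn) (by linarith [show (0 : ℝ) ≤ 2 / n by positivity])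
  have hdom : Ici 0 ⊆ scaleDomain n σ a₀ a₁ := fun t (ht : 0 ≤ t) =>
    lt_add_of_pos_of_le one_pos
      (div_nonneg (mul_nonneg (mul_nonneg hm.le ha₁.le) ht) (by positivity))
  have hA := contDiffOn_AFun (a₁ := a₁) hm.ne' ha₀.ne'
  have hAc : ContinuousOn (AFun n σ a₀ a₁) (Ici 0) := hA.continuousOn.mono hdom
  have hA'c : ContinuousOn (deriv (AFun n σ a₀ a₁)) (Ici 0) :=
    (hA.continuousOn_deriv_of_isOpen (isOpen_scaleDomain n σ a₀ a₁) le_rfl).mono hdom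
  obtain ⟨T, hT, α, hα0, hα⟩ := exists_hasDerivWithinAt_oscillatorField (lam := lam)
    (sub_pos.2 hp) one_pos (hAc.mono Icc_subset_Ici_self) (Y₀, Y₁)
  have hαc : ContinuousOn α (Icc 0 T) := fun t ht => (hα t ht).continuousWithinAt
  have hα' : ∀ t ∈ Ico (0 : ℝ) T, HasDerivWithinAt α
      (oscillatorField (AFun n σ a₀ a₁) lam (p - 1) t (α t)) (Ico 0 T) t := fun t ht =>
    (hα t (Ico_subset_Icc_self ht)).mono Ico_subset_Icc_self
  have hX : xNorm (AFun n σ a₀ a₁) T (fun t => (α t).1) (fun t => (α t).2) < ⊤ :=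
    xNorm_lt_top (hAc.mono Icc_subset_Ici_self) (hA'c.mono Icc_subset_Ici_self)
      (continuous_fst.comp_continuousOn hαc) (continuous_snd.comp_continuousOn hαc)
  refine ⟨T, _, hT, add_pos_of_nonneg_of_pos ENNReal.toReal_nonneg one_pos,
    fun t => (α t).1, fun t => (α t).2, fun t ht => (hα' t ht).fst, fun t ht => (hα' t ht).snd,
    (continuous_snd.comp_continuousOn hαc).mono Ico_subset_Icc_self,
    congrArg Prod.fst hα0, congrArg Prod.snd hα0,
    (ENNReal.le_ofReal_iff_toReal_le hX.ne (by positivity)).2 (le_add_of_nonneg_right zero_le_one)⟩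
end

section
/- Assume a₁ > 0 and σ > −1 + 2/n (case (i)). Let T > 0 and let Y, Z ∈ C¹([0,T)) with ‖Y‖_{X(T)} < ∞ and ‖Z‖_{X(T)} < ∞ both solve D_t²Y(t) + A(t)Y(t) + λ|Y(t)|^{p−1}Y(t) = 0 on [0,T) with the same initial data Y(0) = Z(0) = Y₀ and D_tY(0) = D_tZ(0) = Y₁. Then Y = Z on [0,T). -/
open MeasureTheory Set Filter Metric Topology

/-- The `X(T)`-norm (as an extended nonnegative real):
`‖D_tY‖_{L^∞((0,T))} + ‖√A·Y‖_{L^∞((0,T))} + ‖√(-D_tA)·Y‖_{L²((0,T))}`. -/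
noncomputable def XNorm (n : ℕ) (σ a₀ a₁ T : ℝ)
    (Y Y' : ℝ → EuclideanSpace ℝ (Fin n)) : ENNReal :=
  eLpNorm Y' ⊤ (volume.restrict (Ioo (0 : ℝ) T)) +
    eLpNorm (fun t => Real.sqrt (AFun n σ a₀ a₁ t) • Y t) ⊤ (volume.restrict (Ioo (0 : ℝ) T)) +
    eLpNorm (fun t => Real.sqrt (-(deriv (AFun n σ a₀ a₁) t)) • Y t) 2
      (volume.restrict (Ioo (0 : ℝ) T))

/-!
For `σ > -1` and `a₀, a₁ > 0` the scale function is `a(t) = a₀ (1 + c t)^e` with `c > 0`, so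
`A(t) = (e - e²) c² / (1 + c t)²` is bounded on `[0, ∞)`. The nonlinearity `|Y|^{p-1} Y` is
Lipschitz on bounded sets since `p > 1`. Hence the system `(Y, D_tY)' = (D_tY, -A Y - λ|Y|^{p-1}Y)`
has a right-hand side that is Lipschitz on bounded sets uniformly in time, and Grönwall's
inequality gives uniqueness of continuous solutions.
-/

section LocallyLipschitzODE

variable {E : Type*} [NormedAddCommGroup E] [NormedSpace ℝ E] {a T : ℝ}

theorem ODE_solution_unique_of_mem_Ico_of_lipschitzOnWith_closedBall {v : ℝ → E → E}
    (hv : ∀ R, ∃ K, ∀ τ ∈ Ico a T, LipschitzOnWith K (v τ) (closedBall 0 R))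
    {f g : ℝ → E}
    (hf : ∀ t ∈ Ico a T, HasDerivWithinAt f (v t (f t)) (Ico a T) t)
    (hg : ∀ t ∈ Ico a T, HasDerivWithinAt g (v t (g t)) (Ico a T) t)
    (ha : f a = g a) :
    EqOn f g (Ico a T) := by
  intro t ht
  have hsub : Icc a t ⊆ Ico a T := Icc_subset_Ico_right ht.2
  have hfc : ContinuousOn f (Icc a t) :=
    ContinuousOn.mono (fun s hs => (hf s hs).continuousWithinAt) hsub
  have hgc : ContinuousOn g (Icc a t) :=
    ContinuousOn.mono (fun s hs => (hg s hs).continuousWithinAt) hsub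
  obtain ⟨Rf, hRf⟩ := isCompact_Icc.exists_bound_of_continuousOn hfc
  obtain ⟨Rg, hRg⟩ := isCompact_Icc.exists_bound_of_continuousOn hgc
  obtain ⟨K, hK⟩ := hv (max Rf Rg)
  have hderiv : ∀ {h : ℝ → E}, (∀ s ∈ Ico a T, HasDerivWithinAt h (v s (h s)) (Ico a T) s) →
      ∀ s ∈ Ico a t, HasDerivWithinAt h (v s (h s)) (Ici s) s := fun hh s hs =>
    (hh s (hsub (Ico_subset_Icc_self hs))).mono_of_mem_nhdsWithin
      (mem_of_superset (Ico_mem_nhdsGE (hs.2.trans ht.2)) (Ico_subset_Ico_left hs.1))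
  refine ODE_solution_unique_of_mem_Icc_right (s := fun _ => closedBall 0 (max Rf Rg))
    (fun τ hτ => hK τ (hsub (Ico_subset_Icc_self hτ))) hfc (hderiv hf) (fun s hs => ?_)
    hgc (hderiv hg) (fun s hs => ?_) ha ⟨ht.1, le_rfl⟩
  · exact mem_closedBall_zero_iff.2 ((hRf s (Ico_subset_Icc_self hs)).trans (le_max_left _ _))
  · exact mem_closedBall_zero_iff.2 ((hRg s (Ico_subset_Icc_self hs)).trans (le_max_right _ _))

theorem ODE_solution_unique_of_mem_Ico_second_order {F : ℝ → E → E}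
    (hF : ∀ R, ∃ K, ∀ τ ∈ Ico a T, LipschitzOnWith K (F τ) (closedBall 0 R))
    {Y Y' Z Z' : ℝ → E}
    (hY : ∀ t ∈ Ico a T, HasDerivWithinAt Y (Y' t) (Ico a T) t)
    (hY' : ∀ t ∈ Ico a T, HasDerivWithinAt Y' (F t (Y t)) (Ico a T) t)
    (hZ : ∀ t ∈ Ico a T, HasDerivWithinAt Z (Z' t) (Ico a T) t)
    (hZ' : ∀ t ∈ Ico a T, HasDerivWithinAt Z' (F t (Z t)) (Ico a T) t)
    (h₀ : Y a = Z a) (h₀' : Y' a = Z' a) :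
    EqOn Y Z (Ico a T) := by
  have hv : ∀ R, ∃ K, ∀ τ ∈ Ico a T,
      LipschitzOnWith K (fun w : E × E => (w.2, F τ w.1)) (closedBall 0 R) := by
    intro R
    obtain ⟨K, hK⟩ := hF R
    refine ⟨max 1 (K * 1), fun τ hτ => ?_⟩
    have hfst : MapsTo Prod.fst (closedBall (0 : E × E) R) (closedBall 0 R) := fun w hw =>
      mem_closedBall_zero_iff.2 ((norm_fst_le w).trans (mem_closedBall_zero_iff.1 hw))
    exact LipschitzWith.prod_snd.lipschitzOnWith.prodMk
      ((hK τ hτ).comp LipschitzWith.prod_fst.lipschitzOnWith hfst)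
  intro t ht
  exact congrArg Prod.fst <| ODE_solution_unique_of_mem_Ico_of_lipschitzOnWith_closedBall hv
    (f := fun t => (Y t, Y' t)) (g := fun t => (Z t, Z' t))
    (fun s hs => (hY s hs).prodMk (hY' s hs)) (fun s hs => (hZ s hs).prodMk (hZ' s hs))
    (by rw [h₀, h₀']) ht

end LocallyLipschitzODE

section RpowSmul

theorem Real.mul_rpow_sub_rpow_le {q a b : ℝ} (hq : 0 ≤ q) (hb : 0 ≤ b) (hba : b ≤ a) :
    b * (a ^ q - b ^ q) ≤ q * a ^ q * (a - b) := by
  rcases hb.eq_or_lt with rfl | hb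
  · have : 0 ≤ a := hba
    simp only [zero_mul, sub_zero]
    positivity
  rcases hba.eq_or_lt with rfl | hba
  · simp
  -- Mean value theorem: `a ^ q - b ^ q = q ξ ^ (q - 1) (a - b)` and `b ξ ^ (q - 1) ≤ ξ ^ q ≤ a ^ q`.
  obtain ⟨ξ, hξ, hslope⟩ := exists_hasDerivAt_eq_slope (fun u => u ^ q) (fun u => q * u ^ (q - 1))
    hba (fun x _ => (Real.continuousAt_rpow_const x q (Or.inr hq)).continuousWithinAt)
    (fun x hx => Real.hasDerivAt_rpow_const (Or.inl (hb.trans hx.1).ne'))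
  have hξ0 : 0 < ξ := hb.trans hξ.1
  have hmvt : a ^ q - b ^ q = q * ξ ^ (q - 1) * (a - b) := by
    rw [hslope]
    field_simp [sub_ne_zero.2 hba.ne']
  have hbξ : b * ξ ^ (q - 1) ≤ a ^ q := calc
    b * ξ ^ (q - 1) ≤ ξ * ξ ^ (q - 1) := by gcongr; exact hξ.1.le
    _ = ξ ^ q := by rw [Real.rpow_sub_one hξ0.ne', mul_div_cancel₀ _ hξ0.ne']
    _ ≤ a ^ q := by gcongr; exact hξ.2.le
  calc b * (a ^ q - b ^ q) = q * (b * ξ ^ (q - 1)) * (a - b) := by rw [hmvt]; ring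
    _ ≤ q * a ^ q * (a - b) := by gcongr

variable {E : Type*} [NormedAddCommGroup E] [NormedSpace ℝ E] {q : ℝ}

theorem norm_rpow_smul_sub_rpow_smul_le_s1 (hq : 0 ≤ q) {R : ℝ} {x y : E} (hx : ‖x‖ ≤ R)
    (hy : ‖y‖ ≤ R) : ‖‖x‖ ^ q • x - ‖y‖ ^ q • y‖ ≤ (1 + q) * R ^ q * ‖x - y‖ := by
  wlog h : ‖y‖ ≤ ‖x‖ generalizing x y
  · rw [norm_sub_rev, norm_sub_rev x]
    exact this hy hx (le_of_not_ge h)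
  have hyx : ‖y‖ ^ q ≤ ‖x‖ ^ q := Real.rpow_le_rpow (norm_nonneg y) h hq
  calc ‖‖x‖ ^ q • x - ‖y‖ ^ q • y‖ = ‖‖x‖ ^ q • (x - y) + (‖x‖ ^ q - ‖y‖ ^ q) • y‖ := by
        congr 1; module
    _ ≤ ‖x‖ ^ q * ‖x - y‖ + ‖y‖ * (‖x‖ ^ q - ‖y‖ ^ q) := by
        refine (norm_add_le _ _).trans_eq ?_
        rw [norm_smul, norm_smul, Real.norm_of_nonneg (by positivity),
          Real.norm_of_nonneg (sub_nonneg.2 hyx), mul_comm (_ - _)]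
    _ ≤ R ^ q * ‖x - y‖ + q * ‖x‖ ^ q * (‖x‖ - ‖y‖) := by
        gcongr ?_ + ?_
        · gcongr
        · exact Real.mul_rpow_sub_rpow_le hq (norm_nonneg y) h
    _ ≤ R ^ q * ‖x - y‖ + q * R ^ q * ‖x - y‖ := by
        have hR : 0 ≤ R := (norm_nonneg x).trans hx
        gcongr
        exact norm_sub_norm_le x y
    _ = (1 + q) * R ^ q * ‖x - y‖ := by ring

theorem lipschitzOnWith_rpow_smul (hq : 0 ≤ q) (R : ℝ) :
    LipschitzOnWith ((1 + q) * R ^ q).toNNReal (fun x : E => ‖x‖ ^ q • x) (closedBall 0 R) :=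
  LipschitzOnWith.of_dist_le' fun _ hx _ hy => by
    simpa only [dist_eq_norm] using norm_rpow_smul_sub_rpow_smul_le_s1 hq
      (mem_closedBall_zero_iff.1 hx) (mem_closedBall_zero_iff.1 hy)

theorem exists_lipschitzOnWith_neg_smul_sub_rpow_smul {A : ℝ → ℝ} {s : Set ℝ} {M : ℝ}
    (hA : ∀ τ ∈ s, |A τ| ≤ M) (lam : ℝ) (hq : 0 ≤ q) (R : ℝ) :
    ∃ K, ∀ τ ∈ s,
      LipschitzOnWith K (fun x : E => -(A τ • x) - (lam * ‖x‖ ^ q) • x) (closedBall 0 R) := by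
  refine ⟨M.toNNReal + ‖lam‖₊ * ((1 + q) * R ^ q).toNNReal, fun τ hτ => ?_⟩
  have hAM : ‖A τ‖₊ ≤ M.toNNReal := by
    rw [← NNReal.coe_le_coe, coe_nnnorm, Real.norm_eq_abs]
    exact (hA τ hτ).trans (Real.le_coe_toNNReal M)
  simp_rw [mul_smul]
  exact (((lipschitzWith_smul (A τ)).lipschitzOnWith.neg).sub
    ((lipschitzWith_smul lam).comp_lipschitzOnWith (lipschitzOnWith_rpow_smul hq R))).weaken
    (by gcongr)

end RpowSmul

section CoefficientA

variable {n : ℕ} {σ a₀ a₁ c e t : ℝ}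

theorem hasDerivAt_one_add_mul (c t : ℝ) : HasDerivAt (fun u => 1 + c * u) c t := by
  simpa using ((hasDerivAt_id' t).const_mul c).const_add 1

theorem eventually_one_add_mul_pos (ht : 0 < 1 + c * t) : ∀ᶠ u in 𝓝 t, 0 < 1 + c * u :=
  continuousAt_const.eventually_lt (by fun_prop) ht

theorem scaleFun_sq_eq (hσ : σ ≠ -1) (hc : c = n * (1 + σ) * a₁ / (2 * a₀))
    (he : e = 2 / (n * (1 + σ))) (ht : 0 < 1 + c * t) :
    scaleFun n σ a₀ a₁ t ^ 2 = a₀ ^ 2 * (1 + c * t) ^ (2 * e) := by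
  have hbase : 1 + n * (1 + σ) * a₁ * t / (2 * a₀) = 1 + c * t := by rw [hc]; ring
  rw [scaleFun, if_neg hσ, hbase, ← he, mul_pow, ← Real.rpow_mul_natCast ht.le, Nat.cast_ofNat,
    mul_comm e]

theorem q0Fun_eq (hσ : σ ≠ -1) (ha₀ : a₀ ≠ 0) (hc : c = n * (1 + σ) * a₁ / (2 * a₀))
    (he : e = 2 / (n * (1 + σ))) (ht : 0 < 1 + c * t) :
    q0Fun n σ a₀ a₁ t = 2 * e * c / (1 + c * t) := by
  have hsq : (fun u => scaleFun n σ a₀ a₁ u ^ 2) =ᶠ[𝓝 t]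
      fun u => a₀ ^ 2 * (1 + c * u) ^ (2 * e) :=
    (eventually_one_add_mul_pos ht).mono fun u hu => scaleFun_sq_eq hσ hc he hu
  have hderiv :=
    ((hasDerivAt_one_add_mul c t).rpow_const (p := 2 * e) (Or.inl ht.ne')).const_mul (a₀ ^ 2)
  rw [q0Fun, (hderiv.congr_of_eventuallyEq hsq).deriv, hsq.eq_of_nhds, Real.rpow_sub_one ht.ne']
  field_simp

theorem deriv_q0Fun (hσ : σ ≠ -1) (ha₀ : a₀ ≠ 0) (hc : c = n * (1 + σ) * a₁ / (2 * a₀))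
    (he : e = 2 / (n * (1 + σ))) (ht : 0 < 1 + c * t) :
    deriv (q0Fun n σ a₀ a₁) t = -(2 * e * c * c) / (1 + c * t) ^ 2 := by
  have hq0 : q0Fun n σ a₀ a₁ =ᶠ[𝓝 t] fun u => 2 * e * c * (1 + c * u)⁻¹ :=
    (eventually_one_add_mul_pos ht).mono fun u hu => by
      rw [q0Fun_eq hσ ha₀ hc he hu, div_eq_mul_inv]
  rw [hq0.deriv_eq]
  refine (((hasDerivAt_one_add_mul c t).inv ht.ne').const_mul (2 * e * c)).deriv.trans ?_
  field_simp

theorem AFun_eq (hσ : σ ≠ -1) (ha₀ : a₀ ≠ 0) (hc : c = n * (1 + σ) * a₁ / (2 * a₀))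
    (he : e = 2 / (n * (1 + σ))) (ht : 0 < 1 + c * t) :
    AFun n σ a₀ a₁ t = (e - e ^ 2) * c ^ 2 / (1 + c * t) ^ 2 := by
  rw [AFun, q0Fun_eq hσ ha₀ hc he ht, deriv_q0Fun hσ ha₀ hc he ht]
  field_simp
  ring

theorem abs_AFun_le (hσ : σ ≠ -1) (ha₀ : a₀ ≠ 0) (hc : c = n * (1 + σ) * a₁ / (2 * a₀))
    (he : e = 2 / (n * (1 + σ))) (hc₀ : 0 ≤ c) (ht : 0 ≤ t) :
    |AFun n σ a₀ a₁ t| ≤ |(e - e ^ 2) * c ^ 2| := by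
  have hct : 1 ≤ 1 + c * t := le_add_of_nonneg_right (mul_nonneg hc₀ ht)
  rw [AFun_eq hσ ha₀ hc he (by linarith), abs_div, abs_of_nonneg (sq_nonneg (1 + c * t))]
  exact div_le_self (abs_nonneg _) (one_le_pow₀ hct)

end CoefficientA

theorem stmt_1_general (n : ℕ) (σ a₀ a₁ lam p : ℝ)
    (ha₀ : 0 < a₀) (ha₁ : 0 < a₁) (hσ : -1 + 2 / (n : ℝ) < σ) (hp : 1 < p)
    (T : ℝ)
    (Y₀ Y₁ : EuclideanSpace ℝ (Fin n))
    (Y Y' Z Z' : ℝ → EuclideanSpace ℝ (Fin n))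
    (hY1 : ∀ t ∈ Ico (0 : ℝ) T, HasDerivWithinAt Y (Y' t) (Ico (0 : ℝ) T) t)
    (hY2 : ∀ t ∈ Ico (0 : ℝ) T, HasDerivWithinAt Y'
      (-(AFun n σ a₀ a₁ t • Y t) - (lam * ‖Y t‖ ^ (p - 1)) • Y t) (Ico (0 : ℝ) T) t)
    (hZ1 : ∀ t ∈ Ico (0 : ℝ) T, HasDerivWithinAt Z (Z' t) (Ico (0 : ℝ) T) t)
    (hZ2 : ∀ t ∈ Ico (0 : ℝ) T, HasDerivWithinAt Z'
      (-(AFun n σ a₀ a₁ t • Z t) - (lam * ‖Z t‖ ^ (p - 1)) • Z t) (Ico (0 : ℝ) T) t)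
    (hY0 : Y 0 = Y₀) (hZ0 : Z 0 = Y₀) (hY'0 : Y' 0 = Y₁) (hZ'0 : Z' 0 = Y₁) :
    ∀ t ∈ Ico (0 : ℝ) T, Y t = Z t := by
  have hσ₁ : 0 < 1 + σ := by
    have : 0 ≤ 2 / (n : ℝ) := by positivity
    linarith
  have hc₀ : 0 ≤ (n : ℝ) * (1 + σ) * a₁ / (2 * a₀) := by positivity
  have hA : ∀ τ ∈ Ico (0 : ℝ) T, |AFun n σ a₀ a₁ τ| ≤ _ := fun τ hτ =>
    abs_AFun_le (by linarith) ha₀.ne' rfl rfl hc₀ hτ.1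
  exact ODE_solution_unique_of_mem_Ico_second_order
    (exists_lipschitzOnWith_neg_smul_sub_rpow_smul hA lam (by linarith))
    hY1 hY2 hZ1 hZ2 (hY0.trans hZ0.symm) (hY'0.trans hZ'0.symm)

/-- Case (i): `a₁ > 0`, `σ > -1 + 2/n`. Uniqueness of `C¹` solutions with finite `X(T)`-norm of
`D_t²Y + A(t)Y + λ|Y|^{p-1}Y = 0` with the same initial data. -/
theorem stmt_1 (n : ℕ) (hn : 1 ≤ n) (σ a₀ a₁ lam p : ℝ)
    (ha₀ : 0 < a₀) (ha₁ : 0 < a₁) (hσ : -1 + 2 / (n : ℝ) < σ) (hp : 1 < p)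
    (T : ℝ) (hT : 0 < T)
    (Y₀ Y₁ : EuclideanSpace ℝ (Fin n))
    (Y Y' Z Z' : ℝ → EuclideanSpace ℝ (Fin n))
    (hY1 : ∀ t ∈ Ico (0 : ℝ) T, HasDerivWithinAt Y (Y' t) (Ico (0 : ℝ) T) t)
    (hY2 : ∀ t ∈ Ico (0 : ℝ) T, HasDerivWithinAt Y'
      (-(AFun n σ a₀ a₁ t • Y t) - (lam * ‖Y t‖ ^ (p - 1)) • Y t) (Ico (0 : ℝ) T) t)
    (hYc : ContinuousOn Y' (Ico (0 : ℝ) T))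
    (hYX : XNorm n σ a₀ a₁ T Y Y' < ⊤)
    (hZ1 : ∀ t ∈ Ico (0 : ℝ) T, HasDerivWithinAt Z (Z' t) (Ico (0 : ℝ) T) t)
    (hZ2 : ∀ t ∈ Ico (0 : ℝ) T, HasDerivWithinAt Z'
      (-(AFun n σ a₀ a₁ t • Z t) - (lam * ‖Z t‖ ^ (p - 1)) • Z t) (Ico (0 : ℝ) T) t)
    (hZc : ContinuousOn Z' (Ico (0 : ℝ) T))
    (hZX : XNorm n σ a₀ a₁ T Z Z' < ⊤)
    (hY0 : Y 0 = Y₀) (hZ0 : Z 0 = Y₀) (hY'0 : Y' 0 = Y₁) (hZ'0 : Z' 0 = Y₁) :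
    ∀ t ∈ Ico (0 : ℝ) T, Y t = Z t :=
  stmt_1_general n σ a₀ a₁ lam p ha₀ ha₁ hσ hp T Y₀ Y₁ Y Y' Z Z' hY1 hY2 hZ1 hZ2 hY0 hZ0 hY'0 hZ'0
end

section
/- Let n ≥ 2, H ∈ ℝ, λ ∈ ℝ, p ∈ ℝ with p ≠ 1, R > 0 and δ ∈ ℝ. Assume λR^{p−1} > H² and set ω := √(λR^{p−1} − H²). Then the curve Y : [0,∞) → ℝⁿ defined by Y¹(t) = R·cos(ωt + δ), Y²(t) = R·sin(ωt + δ), Y³ = ⋯ = Yⁿ = 0 satisfies |Y(t)| = R for all t and solves D_t²Y(t) − H²Y(t) + λ|Y(t)|^{p−1}Y(t) = 0 on [0,∞). -/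
/-!
Both coordinates of `Y` oscillate harmonically with frequency `ω`, so `Y'' = -ω² Y`, and `Y`
moves on the circle of radius `R` spanned by two orthogonal vectors of length `R`. On that
circle the nonlinear term is the linear term `λR^{p-1} Y`, and `ω² = λR^{p-1} - H²` is exactly
the frequency that balances the equation.
-/

open Set Real

section HarmonicCurve

variable {E : Type*} [NormedAddCommGroup E]

noncomputable def harmonicCurve [NormedSpace ℝ E] (ω δ : ℝ) (v w : E) (t : ℝ) : E :=
  cos (ω * t + δ) • v + sin (ω * t + δ) • w

section NormedSpace

variable [NormedSpace ℝ E] (ω δ : ℝ) (v w : E) (t : ℝ)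

theorem hasDerivAt_harmonicCurve :
    HasDerivAt (harmonicCurve ω δ v w) (ω • harmonicCurve ω δ w (-v) t) t := by
  have hθ : HasDerivAt (fun s => ω * s + δ) ω t := by
    simpa using ((hasDerivAt_id t).const_mul ω).add_const δ
  refine ((hθ.cos).smul_const v).add ((hθ.sin).smul_const w) |>.congr_deriv ?_
  simp only [harmonicCurve]
  module

theorem hasDerivAt_smul_harmonicCurve :
    HasDerivAt (fun s => ω • harmonicCurve ω δ w (-v) s)
      (-(ω ^ 2) • harmonicCurve ω δ v w t) t := by
  refine (hasDerivAt_harmonicCurve ω δ w (-v) t).const_smul ω |>.congr_deriv ?_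
  simp only [harmonicCurve]
  module

end NormedSpace

theorem norm_harmonicCurve [InnerProductSpace ℝ E] (ω δ : ℝ) {v w : E}
    (horth : inner ℝ v w = 0) (hnorm : ‖w‖ = ‖v‖) (t : ℝ) :
    ‖harmonicCurve ω δ v w t‖ = ‖v‖ := by
  have horth' : inner ℝ (cos (ω * t + δ) • v) (sin (ω * t + δ) • w) = 0 := by
    simp [inner_smul_left, inner_smul_right, horth]
  refine (mul_self_inj (norm_nonneg _) (norm_nonneg _)).1 ?_
  rw [harmonicCurve, norm_add_sq_eq_norm_sq_add_norm_sq_of_inner_eq_zero _ _ horth', norm_smul,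
    norm_smul, hnorm]
  simp only [norm_eq_abs]
  linear_combination ‖v‖ * ‖v‖ * (abs_mul_abs_self (cos (ω * t + δ))
    + abs_mul_abs_self (sin (ω * t + δ)) + sin_sq_add_cos_sq (ω * t + δ))

end HarmonicCurve

theorem stmt_9_general (n : ℕ) (hn : 2 ≤ n) (H lam p R δ : ℝ)
    (hR : 0 < R) (hω : H ^ 2 < lam * R ^ (p - 1))
    (Y : ℝ → EuclideanSpace ℝ (Fin n))
    (hY : ∀ t : ℝ, ∀ i : Fin n,
      Y t i = if (i : ℕ) = 0 then R * Real.cos (Real.sqrt (lam * R ^ (p - 1) - H ^ 2) * t + δ)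
        else if (i : ℕ) = 1 then R * Real.sin (Real.sqrt (lam * R ^ (p - 1) - H ^ 2) * t + δ)
        else 0) :
    (∀ t : ℝ, ‖Y t‖ = R) ∧
    ∃ Y' : ℝ → EuclideanSpace ℝ (Fin n),
      (∀ t ∈ Ici (0 : ℝ), HasDerivWithinAt Y (Y' t) (Ici (0 : ℝ)) t) ∧
      (∀ t ∈ Ici (0 : ℝ), HasDerivWithinAt Y'
        (H ^ 2 • Y t - (lam * ‖Y t‖ ^ (p - 1)) • Y t) (Ici (0 : ℝ)) t) := by
  set ω := √(lam * R ^ (p - 1) - H ^ 2)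
  have hω2 : ω ^ 2 = lam * R ^ (p - 1) - H ^ 2 := sq_sqrt (by linarith)
  set v := EuclideanSpace.single (⟨0, by omega⟩ : Fin n) R
  set w := EuclideanSpace.single (⟨1, by omega⟩ : Fin n) R
  have hYeq : Y = harmonicCurve ω δ v w := by
    ext t i
    rw [hY t i]
    simp only [harmonicCurve, v, w, PiLp.add_apply, PiLp.smul_apply, PiLp.single_apply, Fin.ext_iff,
      smul_eq_mul]
    split_ifs <;> first | omega | ring
  have hnorm (t : ℝ) : ‖Y t‖ = R := by
    rw [hYeq, norm_harmonicCurve ω δ (by simp [v, w, EuclideanSpace.inner_single_left])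
      (by simp [v, w])]
    simp [v, hR.le]
  refine ⟨hnorm, fun s => ω • harmonicCurve ω δ w (-v) s,
    fun t _ => hYeq ▸ (hasDerivAt_harmonicCurve ω δ v w t).hasDerivWithinAt, fun t _ => ?_⟩
  refine (hasDerivAt_smul_harmonicCurve ω δ v w t).hasDerivWithinAt.congr_deriv ?_
  rw [hnorm, hYeq, hω2]
  module

/-- Rotating exact solutions of `D_t²Y - H²Y + λ|Y|^{p-1}Y = 0` in the de Sitter spacetime:
if `λR^{p-1} > H²` and `ω = √(λR^{p-1} - H²)`, the curve
`Y(t) = (R cos(ωt+δ), R sin(ωt+δ), 0, …, 0)` has constant norm `R` and solves the equation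
on `[0, ∞)`. -/
theorem stmt_9 (n : ℕ) (hn : 2 ≤ n) (H lam p R δ : ℝ)
    (hp : p ≠ 1) (hR : 0 < R) (hω : H ^ 2 < lam * R ^ (p - 1))
    (Y : ℝ → EuclideanSpace ℝ (Fin n))
    (hY : ∀ t : ℝ, ∀ i : Fin n,
      Y t i = if (i : ℕ) = 0 then R * Real.cos (Real.sqrt (lam * R ^ (p - 1) - H ^ 2) * t + δ)
        else if (i : ℕ) = 1 then R * Real.sin (Real.sqrt (lam * R ^ (p - 1) - H ^ 2) * t + δ)
        else 0) :
    (∀ t : ℝ, ‖Y t‖ = R) ∧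
    ∃ Y' : ℝ → EuclideanSpace ℝ (Fin n),
      (∀ t ∈ Ici (0 : ℝ), HasDerivWithinAt Y (Y' t) (Ici (0 : ℝ)) t) ∧
      (∀ t ∈ Ici (0 : ℝ), HasDerivWithinAt Y'
        (H ^ 2 • Y t - (lam * ‖Y t‖ ^ (p - 1)) • Y t) (Ici (0 : ℝ)) t) :=
  stmt_9_general n hn H lam p R δ hR hω Y hY
end

section
/- Let n ≥ 2, H ∈ ℝ, λ ∈ ℝ, p ∈ ℝ with p ≠ 1, and R ≥ 0 with λR^{p−1} < H². Suppose Y : [0,∞) → ℝⁿ is a twice continuously differentiable solution of D_t²Y(t) − H²Y(t) + λ|Y(t)|^{p−1}Y(t) = 0 with Y³ = ⋯ = Yⁿ ≡ 0 and |Y(t)| = R for all t ≥ 0. Then Y ≡ 0 (in particular R = 0). -/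
/-!
If `‖Y‖ ≡ R` then `⟪Y, Y'⟫ ≡ 0`, and differentiating once more gives
`⟪Y, Y''⟫ = -‖Y'‖² ≤ 0`. The equation turns the left side into
`(H² - λ R^{p-1}) R²`, which is positive unless `R = 0`.
-/

open Set

section ConstantNorm

variable {E : Type*} [NormedAddCommGroup E] [InnerProductSpace ℝ E]
  {s : Set ℝ} {t R : ℝ} {Y Y' : ℝ → E}

theorem HasDerivWithinAt.eq_zero_of_eqOn_const {F : Type*} [NormedAddCommGroup F]
    [NormedSpace ℝ F] {f : ℝ → F} {f' c : F} (h : HasDerivWithinAt f f' s t)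
    (hf : ∀ x ∈ s, f x = c) (ht : t ∈ s) (hs : UniqueDiffWithinAt ℝ s t) : f' = 0 :=
  hs.eq_deriv _ h ((hasDerivWithinAt_const t s c).congr hf (hf t ht))

theorem inner_deriv_eq_zero_of_norm_eqOn_const (hnorm : ∀ x ∈ s, ‖Y x‖ = R)
    (hY : HasDerivWithinAt Y (Y' t) s t) (ht : t ∈ s) (hs : UniqueDiffWithinAt ℝ s t) :
    inner ℝ (Y t) (Y' t) = 0 := by
  have hsq : ∀ x ∈ s, inner ℝ (Y x) (Y x) = R ^ 2 := fun x hx => by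
    rw [real_inner_self_eq_norm_sq, hnorm x hx]
  have h := (hY.inner ℝ hY).eq_zero_of_eqOn_const hsq ht hs
  rw [real_inner_comm (Y t) (Y' t)] at h
  linarith

theorem inner_secondDeriv_add_norm_sq_eq_zero_of_norm_eqOn_const {Y'' : E}
    (hnorm : ∀ x ∈ s, ‖Y x‖ = R) (hY : ∀ x ∈ s, HasDerivWithinAt Y (Y' x) s x)
    (hY' : HasDerivWithinAt Y' Y'' s t) (ht : t ∈ s) (hs : UniqueDiffOn ℝ s) :
    inner ℝ (Y t) Y'' + ‖Y' t‖ ^ 2 = 0 := by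
  have horth : ∀ x ∈ s, inner ℝ (Y x) (Y' x) = 0 := fun x hx =>
    inner_deriv_eq_zero_of_norm_eqOn_const hnorm (hY x hx) hx (hs x hx)
  rw [← real_inner_self_eq_norm_sq]
  exact ((hY t ht).inner ℝ hY').eq_zero_of_eqOn_const horth ht (hs t ht)

end ConstantNorm

theorem stmt_10_general (n : ℕ) (H lam p R : ℝ)
    (hRlt : lam * R ^ (p - 1) < H ^ 2)
    (Y Y' : ℝ → EuclideanSpace ℝ (Fin n))
    (hY1 : ∀ t ∈ Ici (0 : ℝ), HasDerivWithinAt Y (Y' t) (Ici (0 : ℝ)) t)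
    (hY2 : ∀ t ∈ Ici (0 : ℝ), HasDerivWithinAt Y'
      (H ^ 2 • Y t - (lam * ‖Y t‖ ^ (p - 1)) • Y t) (Ici (0 : ℝ)) t)
    (hnorm : ∀ t ∈ Ici (0 : ℝ), ‖Y t‖ = R) :
    (∀ t ∈ Ici (0 : ℝ), Y t = 0) ∧ R = 0 := by
  have h0 : (0 : ℝ) ∈ Ici (0 : ℝ) := self_mem_Ici
  have hkey := inner_secondDeriv_add_norm_sq_eq_zero_of_norm_eqOn_const hnorm hY1 (hY2 0 h0) h0
    (uniqueDiffOn_Ici 0)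
  have hinner : inner ℝ (Y 0) (H ^ 2 • Y 0 - (lam * ‖Y 0‖ ^ (p - 1)) • Y 0)
      = (H ^ 2 - lam * R ^ (p - 1)) * R ^ 2 := by
    rw [inner_sub_right, real_inner_smul_right, real_inner_smul_right,
      real_inner_self_eq_norm_sq, hnorm 0 h0]
    ring
  have hnonpos : (H ^ 2 - lam * R ^ (p - 1)) * R ^ 2 ≤ 0 := by
    linarith [sq_nonneg ‖Y' 0‖]
  have hR : R = 0 := (pow_eq_zero_iff two_ne_zero).mp
    (le_antisymm (nonpos_of_mul_nonpos_right hnonpos (sub_pos.mpr hRlt)) (sq_nonneg R))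
  exact ⟨fun t ht => norm_eq_zero.mp (hR ▸ hnorm t ht), hR⟩

/-- In the de Sitter spacetime, if `λR^{p-1} < H²`, then the only planar solution of
`D_t²Y - H²Y + λ|Y|^{p-1}Y = 0` on `[0,∞)` with constant norm `|Y(t)| = R` is `Y ≡ 0`
(in particular `R = 0`). -/
theorem stmt_10 (n : ℕ) (hn : 2 ≤ n) (H lam p R : ℝ)
    (hp : p ≠ 1) (hR : 0 ≤ R) (hRlt : lam * R ^ (p - 1) < H ^ 2)
    (Y Y' : ℝ → EuclideanSpace ℝ (Fin n))
    (hY1 : ∀ t ∈ Ici (0 : ℝ), HasDerivWithinAt Y (Y' t) (Ici (0 : ℝ)) t)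
    (hY2 : ∀ t ∈ Ici (0 : ℝ), HasDerivWithinAt Y'
      (H ^ 2 • Y t - (lam * ‖Y t‖ ^ (p - 1)) • Y t) (Ici (0 : ℝ)) t)
    (hYc : ContinuousOn Y' (Ici (0 : ℝ)))
    (hplanar : ∀ t ∈ Ici (0 : ℝ), ∀ i : Fin n, 2 ≤ (i : ℕ) → Y t i = 0)
    (hnorm : ∀ t ∈ Ici (0 : ℝ), ‖Y t‖ = R) :
    (∀ t ∈ Ici (0 : ℝ), Y t = 0) ∧ R = 0 :=
  stmt_10_general n H lam p R hRlt Y Y' hY1 hY2 hnorm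
end

section
/- Let H ≥ 0, λ > 0, 1 < p < ∞ and Y₀, Y₁ ∈ ℝ. Let Y : [0,∞) → ℝ be a global weak solution of D_t²Y − H²Y + λ|Y|^p = 0 with data (Y₀, Y₁), i.e., Y and |Y|^p are locally integrable on [0,∞) and for every twice continuously differentiable compactly supported function φ : [0,∞) → ℝ one has −Y₁φ(0) + Y₀(D_tφ)(0) + ∫₀^∞ ( Y(t)·(D_t²φ)(t) − H²Y(t)·φ(t) + λ|Y(t)|^p·φ(t) ) dt = 0. If HY₀ + Y₁ ≤ 0, then Y = 0 almost everywhere on [0,∞). -/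
/-!
Test the weak formulation against `φ_R t = exp (-H t) * ψ (t / R)`, where `ψ = η ^ (k + 2)` is a
power of a smooth bump `η` equal to `1` on `[-1, 1]`. Since `exp (-H t)` solves `φ'' = H² φ`, only
derivatives of the cutoff survive in `φ_R'' - H² φ_R`; they live on `[R, 2R]` and are
`O(R⁻¹ φ_R ^ (1/p))` once `(k + 2) / p ≤ k`. As `φ_R 0 = 1` and `φ_R' 0 = -H`, the boundary terms
equal `-(H Y₀ + Y₁) ≥ 0`, so with `q` the conjugate exponent, Young's inequality gives
`λ ∫ |Y|^p φ_R ≤ ∫ |Y| |φ_R'' - H² φ_R| ≤ λ/2 ∫ |Y|^p φ_R + C R^(1-q)`.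
Letting `R → ∞` yields `∫₀^T |Y|^p exp (-H t) = 0` for every `T`.
-/

open MeasureTheory Set Filter Topology

theorem deriv_deriv_eq_zero_of_eventuallyEq_const {f : ℝ → ℝ} {x c : ℝ}
    (h : f =ᶠ[𝓝 x] fun _ => c) : deriv (deriv f) x = 0 := by
  rw [h.deriv.deriv_eq, deriv_const', deriv_const]

theorem deriv_deriv_comp_mul_left (c : ℝ) (f : ℝ → ℝ) (x : ℝ) :
    deriv (deriv fun y => f (c * y)) x = c ^ 2 * deriv (deriv f) (c * x) := by
  have h : deriv (fun y => f (c * y)) = fun y => c * deriv f (c * y) :=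
    funext fun y => deriv_comp_mul_left c f y
  rw [h, deriv_const_mul_field']
  dsimp only
  rw [deriv_comp_mul_left, smul_eq_mul, sq, mul_assoc]

theorem ContDiff.differentiable_deriv_of_two {f : ℝ → ℝ} (hf : ContDiff ℝ 2 f) :
    Differentiable ℝ (deriv f) :=
  ((contDiff_succ_iff_deriv (n := 1)).1 hf).2.2.differentiable one_ne_zero

theorem deriv_fun_pow_succ_succ {f : ℝ → ℝ} (hf : Differentiable ℝ f) (k : ℕ) :
    deriv (fun y => f y ^ (k + 2)) = fun y => (k + 2) * f y ^ (k + 1) * deriv f y := by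
  funext y
  rw [deriv_fun_pow (hf y)]
  push_cast
  ring

theorem deriv_deriv_fun_pow_succ_succ {f : ℝ → ℝ} (hf : ContDiff ℝ 2 f) (k : ℕ)
    (x : ℝ) :
    deriv (deriv fun y => f y ^ (k + 2)) x =
      (k + 2) * ((k + 1) * f x ^ k * deriv f x ^ 2 + f x ^ (k + 1) * deriv (deriv f) x) := by
  have hf1 : Differentiable ℝ f := hf.differentiable two_ne_zero
  have h : HasDerivAt (fun y => (k + 2) * (f y ^ (k + 1) * deriv f y))
      ((k + 2) * ((k + 1 : ℕ) * f x ^ k * deriv f x * deriv f x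
        + f x ^ (k + 1) * deriv (deriv f) x)) x :=
    (((hf1 x).hasDerivAt.pow (k + 1)).mul (hf.differentiable_deriv_of_two x).hasDerivAt).const_mul _
  rw [deriv_fun_pow_succ_succ hf1, funext fun y => mul_assoc _ _ (deriv f y), h.deriv]
  push_cast
  ring

theorem deriv_exp_mul {g : ℝ → ℝ} (hg : Differentiable ℝ g) (H : ℝ) :
    deriv (fun t => Real.exp (-H * t) * g t)
      = fun t => Real.exp (-H * t) * (deriv g t - H * g t) := by
  funext t
  have h : HasDerivAt (fun t => Real.exp (-H * t) * g t)
      (Real.exp (-H * t) * (-H * 1) * g t + Real.exp (-H * t) * deriv g t) t :=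
    (((hasDerivAt_id t).const_mul (-H)).exp).mul (hg t).hasDerivAt
  rw [h.deriv]
  ring

theorem deriv_deriv_exp_mul {g : ℝ → ℝ} (hg : ContDiff ℝ 2 g) (H t : ℝ) :
    deriv (deriv fun t => Real.exp (-H * t) * g t) t
      = Real.exp (-H * t) * (deriv (deriv g) t - 2 * H * deriv g t + H ^ 2 * g t) := by
  have hg1 : Differentiable ℝ g := hg.differentiable two_ne_zero
  have hg2 := hg.differentiable_deriv_of_two
  rw [deriv_exp_mul hg1,
    deriv_exp_mul (g := fun t => deriv g t - H * g t) (hg2.sub (hg1.const_mul H))]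
  dsimp only
  rw [deriv_fun_sub (hg2 t) ((hg1 t).const_mul H), deriv_const_mul _ (hg1 t)]
  ring

theorem abs_deriv_pow_add_abs_deriv_deriv_pow_le {f : ℝ → ℝ} (hf : ContDiff ℝ 2 f)
    (hf0 : ∀ x, 0 ≤ f x) (hf1 : ∀ x, f x ≤ 1) {M : ℝ} (hM1 : ∀ x, |deriv f x| ≤ M)
    (hM2 : ∀ x, |deriv (deriv f) x| ≤ M) (k : ℕ) (x : ℝ) :
    |deriv (fun y => f y ^ (k + 2)) x| + |deriv (deriv fun y => f y ^ (k + 2)) x|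
      ≤ (k + 2) * ((k + 1) * M ^ 2 + 2 * M) * f x ^ k := by
  rw [deriv_deriv_fun_pow_succ_succ hf, deriv_fun_pow_succ_succ (hf.differentiable two_ne_zero)]
  set a := f x
  have ha : 0 ≤ a := hf0 x
  have hak : a ^ (k + 1) ≤ a ^ k := pow_le_pow_of_le_one ha (hf1 x) k.le_succ
  have hd1 : deriv f x ^ 2 ≤ M ^ 2 := sq_le_sq' (abs_le.1 (hM1 x)).1 (abs_le.1 (hM1 x)).2
  have hfirst : |(k + 2) * a ^ (k + 1) * deriv f x| ≤ (k + 2) * (a ^ k * M) := by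
    rw [abs_mul, abs_mul, abs_of_nonneg (by positivity : (0 : ℝ) ≤ k + 2),
      abs_of_nonneg (by positivity : 0 ≤ a ^ (k + 1)), mul_assoc]
    gcongr
    exact hM1 x
  have hsecond : |(k + 2) * ((k + 1) * a ^ k * deriv f x ^ 2 + a ^ (k + 1) * deriv (deriv f) x)|
      ≤ (k + 2) * ((k + 1) * a ^ k * M ^ 2 + a ^ k * M) := by
    rw [abs_mul, abs_of_nonneg (by positivity : (0 : ℝ) ≤ k + 2)]
    gcongr
    refine (abs_add_le _ _).trans (add_le_add ?_ ?_)
    · rw [abs_of_nonneg (by positivity)]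
      gcongr
    · rw [abs_mul, abs_of_nonneg (by positivity : 0 ≤ a ^ (k + 1))]
      exact mul_le_mul hak (hM2 x) (abs_nonneg _) (by positivity)
  calc _ ≤ (k + 2) * (a ^ k * M) + (k + 2) * ((k + 1) * a ^ k * M ^ 2 + a ^ k * M) :=
        add_le_add hfirst hsecond
    _ = (k + 2) * ((k + 1) * M ^ 2 + 2 * M) * a ^ k := by ring

theorem Real.young_inequality_of_nonneg_eps {p q : ℝ} (hpq : p.HolderConjugate q) {ε : ℝ}
    (hε : 0 < ε) :
    ∃ C, ∀ a b : ℝ, 0 ≤ a → 0 ≤ b → a * b ≤ ε * a ^ p + C * b ^ q := by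
  set c := (ε * p) ^ p⁻¹
  have hc : 0 < c := Real.rpow_pos_of_pos (mul_pos hε hpq.pos) _
  have hcp : c ^ p = ε * p := Real.rpow_inv_rpow (mul_pos hε hpq.pos).le hpq.ne_zero
  refine ⟨(c ^ q)⁻¹ / q, fun a b ha hb => ?_⟩
  calc a * b = (c * a) * (b / c) := by field_simp
    _ ≤ (c * a) ^ p / p + (b / c) ^ q / q :=
        Real.young_inequality_of_nonneg (by positivity) (by positivity) hpq
    _ = ε * a ^ p + (c ^ q)⁻¹ / q * b ^ q := by
        rw [Real.mul_rpow hc.le ha, Real.div_rpow hb hc.le, hcp]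
        field_simp [hpq.ne_zero]

theorem pow_le_rpow_inv_pow {a p : ℝ} (ha0 : 0 ≤ a) (ha1 : a ≤ 1) (hp : 0 < p) {k n : ℕ}
    (hkn : (n : ℝ) ≤ k * p) : a ^ k ≤ (a ^ n) ^ p⁻¹ := by
  rw [← Real.rpow_natCast, ← Real.rpow_natCast, ← Real.rpow_mul ha0]
  exact Real.rpow_le_rpow_of_exponent_ge' ha0 ha1 (by positivity)
    (by rw [← div_eq_mul_inv, div_le_iff₀ hp]; exact hkn)

theorem MeasureTheory.LocallyIntegrableOn.integrableOn_mul_of_hasCompactSupport {X : Type*}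
    [TopologicalSpace X] [MeasurableSpace X] [OpensMeasurableSpace X] [T2Space X] {μ : Measure X}
    {s : Set X} (hs : IsClosed s) {f g : X → ℝ} (hf : LocallyIntegrableOn f s μ)
    (hg : Continuous g) (hgc : HasCompactSupport g) :
    IntegrableOn (fun x => f x * g x) s μ :=
  ((locallyIntegrableOn_iff_locallyIntegrable_restrict hs).1
    hf).integrable_smul_right_of_hasCompactSupport hg hgc

theorem setIntegral_Ici_indicator_Icc_const {a b : ℝ} (ha : 0 ≤ a) (hab : a ≤ b) (c : ℝ) :
    ∫ t in Ici 0, (Icc a b).indicator (fun _ => c) t = (b - a) * c := by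
  rw [setIntegral_indicator measurableSet_Icc, inter_eq_right.2 (Icc_subset_Ici_iff hab |>.2 ha),
    setIntegral_const, Real.volume_real_Icc, max_eq_left (sub_nonneg.2 hab), smul_eq_mul]

noncomputable def unitBump : ContDiffBump (0 : ℝ) := ⟨1, 2, one_pos, one_lt_two⟩

noncomputable def cutoffPow (k : ℕ) (s : ℝ) : ℝ := unitBump s ^ (k + 2)

namespace cutoffPow

theorem contDiff (k : ℕ) : ContDiff ℝ 2 (cutoffPow k) :=
  unitBump.contDiff.pow _

theorem hasCompactSupport (k : ℕ) : HasCompactSupport (cutoffPow k) :=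
  unitBump.hasCompactSupport.mono fun s hs h => hs (by simp [cutoffPow, h])

theorem nonneg (k : ℕ) (s : ℝ) : 0 ≤ cutoffPow k s :=
  pow_nonneg unitBump.nonneg _

theorem eq_one (k : ℕ) {s : ℝ} (hs : |s| ≤ 1) : cutoffPow k s = 1 := by
  rw [cutoffPow, unitBump.one_of_mem_closedBall (by simpa [unitBump] using hs), one_pow]

theorem eventuallyEq_const (k : ℕ) {s : ℝ} (hs : s ∈ Ioo (-1) 1 ∪ Ioi 2) :
    ∃ c, cutoffPow k =ᶠ[𝓝 s] fun _ => c := by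
  rcases hs with hs | hs
  · refine ⟨1, eventually_of_mem (Ioo_mem_nhds hs.1 hs.2) fun y hy => eq_one k ?_⟩
    exact abs_le.2 ⟨hy.1.le, hy.2.le⟩
  · refine ⟨0, eventually_of_mem (Ioi_mem_nhds hs) fun y hy => ?_⟩
    rw [cutoffPow, unitBump.zero_of_le_dist, zero_pow (by omega)]
    simp only [unitBump, Real.dist_eq, sub_zero]
    exact (lt_abs.2 (Or.inl hy)).le

theorem deriv_eq_zero (k : ℕ) {s : ℝ} (hs : s ∈ Ioo (-1) 1 ∪ Ioi 2) :
    deriv (cutoffPow k) s = 0 := by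
  obtain ⟨c, hc⟩ := eventuallyEq_const k hs
  rw [hc.deriv_eq, deriv_const]

theorem deriv_deriv_eq_zero (k : ℕ) {s : ℝ} (hs : s ∈ Ioo (-1) 1 ∪ Ioi 2) :
    deriv (deriv (cutoffPow k)) s = 0 := by
  obtain ⟨c, hc⟩ := eventuallyEq_const k hs
  exact deriv_deriv_eq_zero_of_eventuallyEq_const hc

theorem exists_abs_deriv_add_abs_deriv_deriv_le (k : ℕ) :
    ∃ K, ∀ s, |deriv (cutoffPow k) s| + |deriv (deriv (cutoffPow k)) s|
      ≤ K * unitBump s ^ k := by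
  have hη : ContDiff ℝ 2 unitBump := unitBump.contDiff
  obtain ⟨M₁, hM₁⟩ := (hη.continuous_deriv one_le_two).bounded_above_of_compact_support
    unitBump.hasCompactSupport.deriv
  have hη'' : Continuous (deriv (deriv unitBump)) :=
    (unitBump.contDiff.iterate_deriv 2).continuous
  obtain ⟨M₂, hM₂⟩ :=
    hη''.bounded_above_of_compact_support unitBump.hasCompactSupport.deriv.deriv
  exact ⟨_, abs_deriv_pow_add_abs_deriv_deriv_pow_le hη (fun _ => unitBump.nonneg)
    (fun _ => unitBump.le_one) (M := max M₁ M₂) (fun s => (hM₁ s).trans (le_max_left _ _))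
    (fun s => (hM₂ s).trans (le_max_right _ _)) k⟩

theorem exists_abs_deriv_add_abs_deriv_deriv_le_rpow {p : ℝ} (hp : 0 < p) {k : ℕ}
    (hk : (k + 2 : ℝ) ≤ k * p) :
    ∃ K, 0 ≤ K ∧ ∀ s, |deriv (cutoffPow k) s| + |deriv (deriv (cutoffPow k)) s|
      ≤ K * cutoffPow k s ^ p⁻¹ := by
  obtain ⟨K, hK⟩ := exists_abs_deriv_add_abs_deriv_deriv_le k
  refine ⟨max K 0, le_max_right _ _, fun s => (hK s).trans ?_⟩
  have hη := unitBump.nonneg (x := s)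
  calc K * unitBump s ^ k ≤ max K 0 * unitBump s ^ k :=
        mul_le_mul_of_nonneg_right (le_max_left _ _) (pow_nonneg hη _)
    _ ≤ max K 0 * cutoffPow k s ^ p⁻¹ :=
        mul_le_mul_of_nonneg_left
          (pow_le_rpow_inv_pow hη unitBump.le_one hp (by push_cast; exact hk)) (le_max_right _ _)

end cutoffPow

noncomputable def testFunction (H R : ℝ) (k : ℕ) (t : ℝ) : ℝ :=
  Real.exp (-H * t) * cutoffPow k (R⁻¹ * t)

namespace testFunction

variable {H R : ℝ} {k : ℕ}

theorem contDiff : ContDiff ℝ 2 (testFunction H R k) :=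
  (Real.contDiff_exp.comp (contDiff_const.mul contDiff_id)).mul
    ((cutoffPow.contDiff k).comp (contDiff_const.mul contDiff_id))

theorem hasCompactSupport (hR : R ≠ 0) : HasCompactSupport (testFunction H R k) :=
  ((cutoffPow.hasCompactSupport k).comp_smul (inv_ne_zero hR)).mul_left

theorem nonneg (t : ℝ) : 0 ≤ testFunction H R k t :=
  mul_nonneg (Real.exp_nonneg _) (cutoffPow.nonneg k _)

theorem eq_exp (hR : 0 < R) {t : ℝ} (ht : |t| ≤ R) :
    testFunction H R k t = Real.exp (-H * t) := by
  rw [testFunction, cutoffPow.eq_one, mul_one]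
  rwa [abs_mul, abs_inv, abs_of_pos hR, inv_mul_le_iff₀ hR, mul_one]

theorem apply_zero : testFunction H R k 0 = 1 := by
  simp [testFunction, cutoffPow.eq_one]

theorem deriv_zero : deriv (testFunction H R k) 0 = -H := by
  have hg : Differentiable ℝ fun t => cutoffPow k (R⁻¹ * t) :=
    ((cutoffPow.contDiff k).differentiable two_ne_zero).comp (differentiable_id.const_mul _)
  rw [show testFunction H R k = fun t => Real.exp (-H * t) * cutoffPow k (R⁻¹ * t) from rfl,
    deriv_exp_mul hg]
  dsimp only
  rw [deriv_comp_mul_left, cutoffPow.deriv_eq_zero k (by simp)]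
  simp [cutoffPow.eq_one]

theorem deriv_deriv_sub_sq_mul (t : ℝ) :
    deriv (deriv (testFunction H R k)) t - H ^ 2 * testFunction H R k t
      = Real.exp (-H * t) * (R⁻¹ ^ 2 * deriv (deriv (cutoffPow k)) (R⁻¹ * t)
        - 2 * H * (R⁻¹ * deriv (cutoffPow k) (R⁻¹ * t))) := by
  rw [testFunction,
    show testFunction H R k = fun t => Real.exp (-H * t) * cutoffPow k (R⁻¹ * t) from rfl,
    deriv_deriv_exp_mul (g := fun t => cutoffPow k (R⁻¹ * t))
      ((cutoffPow.contDiff k).comp (contDiff_const.mul contDiff_id)),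
    deriv_deriv_comp_mul_left, deriv_comp_mul_left, smul_eq_mul]
  ring

theorem deriv_deriv_sub_sq_mul_eq_zero (hR : 0 < R) {t : ℝ} (ht : 0 ≤ t)
    (htR : t ∉ Icc R (2 * R)) :
    deriv (deriv (testFunction H R k)) t - H ^ 2 * testFunction H R k t = 0 := by
  have hs : R⁻¹ * t ∈ Ioo (-1) 1 ∪ Ioi 2 := by
    rw [mem_Icc, not_and_or, not_le, not_le] at htR
    rcases htR with h | h
    · refine Or.inl ⟨by nlinarith [inv_pos.2 hR], ?_⟩
      rwa [inv_mul_lt_iff₀ hR, mul_one]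
    · rw [mem_union, mem_Ioi, lt_inv_mul_iff₀ hR]
      exact Or.inr (by linarith)
  rw [deriv_deriv_sub_sq_mul, cutoffPow.deriv_eq_zero k hs, cutoffPow.deriv_deriv_eq_zero k hs]
  simp

theorem abs_deriv_deriv_sub_sq_mul_le_of_mem (hH : 0 ≤ H) (hR : 1 ≤ R) {p : ℝ} (hp : 1 ≤ p)
    {K : ℝ} (hK : ∀ s, |deriv (cutoffPow k) s| + |deriv (deriv (cutoffPow k)) s|
      ≤ K * cutoffPow k s ^ p⁻¹) {t : ℝ} (ht : 0 ≤ t) :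
    |deriv (deriv (testFunction H R k)) t - H ^ 2 * testFunction H R k t|
      ≤ (1 + 2 * H) * K / R * testFunction H R k t ^ p⁻¹ := by
  have hr : 0 ≤ R⁻¹ := inv_nonneg.2 (zero_le_one.trans hR)
  have hrr : R⁻¹ ^ 2 ≤ R⁻¹ := by
    rw [sq]; exact mul_le_of_le_one_left hr (inv_le_one_of_one_le₀ hR)
  have hexp : Real.exp (-H * t) ≤ Real.exp (-H * t) ^ p⁻¹ :=
    Real.self_le_rpow_of_le_one (Real.exp_nonneg _)
      (Real.exp_le_one_iff.2 (by nlinarith)) (inv_le_one_of_one_le₀ hp)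
  rw [deriv_deriv_sub_sq_mul]
  set s := R⁻¹ * t
  set d₁ := |deriv (cutoffPow k) s|
  set d₂ := |deriv (deriv (cutoffPow k)) s|
  calc |Real.exp (-H * t) * (R⁻¹ ^ 2 * deriv (deriv (cutoffPow k)) s
        - 2 * H * (R⁻¹ * deriv (cutoffPow k) s))|
      ≤ Real.exp (-H * t) * ((1 + 2 * H) * R⁻¹ * (d₁ + d₂)) := by
        rw [abs_mul, abs_of_pos (Real.exp_pos _)]
        gcongr
        refine (abs_sub _ _).trans ?_
        simp only [abs_mul, abs_pow, abs_two, abs_of_nonneg hH, abs_of_nonneg hr]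
        nlinarith [mul_le_mul_of_nonneg_right hrr (abs_nonneg (deriv (deriv (cutoffPow k)) s)),
          mul_nonneg hr (abs_nonneg (deriv (cutoffPow k) s)),
          mul_nonneg (mul_nonneg hH hr) (abs_nonneg (deriv (deriv (cutoffPow k)) s))]
    _ ≤ Real.exp (-H * t) ^ p⁻¹ * ((1 + 2 * H) * R⁻¹ * (K * cutoffPow k s ^ p⁻¹)) := by
        gcongr
        exact hK s
    _ = (1 + 2 * H) * K / R * testFunction H R k t ^ p⁻¹ := by
        rw [testFunction, Real.mul_rpow (Real.exp_nonneg _) (cutoffPow.nonneg k _)]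
        ring

theorem abs_deriv_deriv_sub_sq_mul_le (hH : 0 ≤ H) (hR : 1 ≤ R) {p : ℝ} (hp : 1 ≤ p)
    {K : ℝ} (hK : ∀ s, |deriv (cutoffPow k) s| + |deriv (deriv (cutoffPow k)) s|
      ≤ K * cutoffPow k s ^ p⁻¹) {t : ℝ} (ht : 0 ≤ t) :
    |deriv (deriv (testFunction H R k)) t - H ^ 2 * testFunction H R k t|
      ≤ (Icc R (2 * R)).indicator (fun _ => (1 + 2 * H) * K / R) t
        * testFunction H R k t ^ p⁻¹ := by
  by_cases htR : t ∈ Icc R (2 * R)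
  · rw [indicator_of_mem htR]
    exact abs_deriv_deriv_sub_sq_mul_le_of_mem hH hR hp hK ht
  · rw [indicator_of_notMem htR, zero_mul,
      deriv_deriv_sub_sq_mul_eq_zero (one_pos.trans_le hR) ht htR, abs_zero]

theorem abs_mul_abs_deriv_deriv_sub_sq_mul_le (hH : 0 ≤ H) (hR : 1 ≤ R) {p q : ℝ}
    (hpq : p.HolderConjugate q) {K : ℝ} (hK0 : 0 ≤ K)
    (hK : ∀ s, |deriv (cutoffPow k) s| + |deriv (deriv (cutoffPow k)) s|
      ≤ K * cutoffPow k s ^ p⁻¹)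
    {ε C : ℝ} (hC : ∀ a b : ℝ, 0 ≤ a → 0 ≤ b → a * b ≤ ε * a ^ p + C * b ^ q)
    {t : ℝ} (ht : 0 ≤ t) (y : ℝ) :
    |y| * |deriv (deriv (testFunction H R k)) t - H ^ 2 * testFunction H R k t|
      ≤ ε * (|y| ^ p * testFunction H R k t)
        + (Icc R (2 * R)).indicator (fun _ => C * ((1 + 2 * H) * K / R) ^ q) t := by
  set χ := (Icc R (2 * R)).indicator fun _ => (1 + 2 * H) * K / R
  have hχ : 0 ≤ χ t :=
    indicator_nonneg (fun _ _ => div_nonneg (by positivity) (zero_le_one.trans hR)) t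
  have hφ : 0 ≤ testFunction H R k t := nonneg t
  calc |y| * |deriv (deriv (testFunction H R k)) t - H ^ 2 * testFunction H R k t|
      ≤ |y| * (χ t * testFunction H R k t ^ p⁻¹) := by
        gcongr
        exact abs_deriv_deriv_sub_sq_mul_le hH hR hpq.lt.le hK ht
    _ = (|y| * testFunction H R k t ^ p⁻¹) * χ t := by ring
    _ ≤ ε * (|y| * testFunction H R k t ^ p⁻¹) ^ p + C * χ t ^ q :=
        hC _ _ (by positivity) hχ
    _ = ε * (|y| ^ p * testFunction H R k t)
        + (Icc R (2 * R)).indicator (fun _ => C * ((1 + 2 * H) * K / R) ^ q) t := by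
        rw [Real.mul_rpow (abs_nonneg _) (by positivity), Real.rpow_inv_rpow hφ hpq.ne_zero]
        by_cases htR : t ∈ Icc R (2 * R)
        · simp [χ, htR]
        · simp [χ, htR, Real.zero_rpow hpq.symm.ne_zero]

end testFunction

structure IsWeakSolution (H lam p Y₀ Y₁ : ℝ) (Y : ℝ → ℝ) : Prop where
  locallyIntegrableOn : LocallyIntegrableOn Y (Ici 0)
  locallyIntegrableOn_rpow : LocallyIntegrableOn (fun t => |Y t| ^ p) (Ici 0)
  weak_eq : ∀ φ : ℝ → ℝ, ContDiff ℝ 2 φ → HasCompactSupport φ →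
    -Y₁ * φ 0 + Y₀ * deriv φ 0 +
      ∫ t in Ici (0 : ℝ),
        (Y t * deriv (deriv φ) t - H ^ 2 * Y t * φ t + lam * |Y t| ^ p * φ t) = 0

namespace IsWeakSolution

variable {H lam p Y₀ Y₁ : ℝ} {Y : ℝ → ℝ}

theorem integrableOn_rpow_mul (hY : IsWeakSolution H lam p Y₀ Y₁ Y) {φ : ℝ → ℝ}
    (hφ : Continuous φ) (hφc : HasCompactSupport φ) :
    IntegrableOn (fun t => |Y t| ^ p * φ t) (Ici 0) :=
  hY.locallyIntegrableOn_rpow.integrableOn_mul_of_hasCompactSupport isClosed_Ici hφ hφc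

theorem mul_integral_rpow_mul_le (hY : IsWeakSolution H lam p Y₀ Y₁ Y)
    (hdata : H * Y₀ + Y₁ ≤ 0) {φ : ℝ → ℝ} (hφ : ContDiff ℝ 2 φ) (hφc : HasCompactSupport φ)
    (hφ0 : φ 0 = 1) (hφ'0 : deriv φ 0 = -H) :
    lam * ∫ t in Ici 0, |Y t| ^ p * φ t
      ≤ ∫ t in Ici 0, |Y t| * |deriv (deriv φ) t - H ^ 2 * φ t| := by
  set G := fun t => deriv (deriv φ) t - H ^ 2 * φ t
  have hG : Continuous G :=
    (hφ.iterate_deriv' 0 2).continuous.sub (continuous_const.mul hφ.continuous)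
  have hGc : HasCompactSupport G := hφc.deriv.deriv.sub hφc.mul_left
  have hYG : IntegrableOn (fun t => Y t * G t) (Ici 0) :=
    hY.locallyIntegrableOn.integrableOn_mul_of_hasCompactSupport isClosed_Ici hG hGc
  have hw := hY.weak_eq φ hφ hφc
  have hsplit : ∫ t in Ici (0 : ℝ),
      (Y t * deriv (deriv φ) t - H ^ 2 * Y t * φ t + lam * |Y t| ^ p * φ t)
      = (∫ t in Ici 0, Y t * G t) + lam * ∫ t in Ici 0, |Y t| ^ p * φ t := by
    rw [← integral_const_mul,
      ← integral_add hYG ((hY.integrableOn_rpow_mul hφ.continuous hφc).const_mul lam)]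
    congr 1 with t
    ring
  have habs : -∫ t in Ici 0, Y t * G t ≤ ∫ t in Ici 0, |Y t| * |G t| := by
    simpa only [abs_mul] using (neg_le_abs _).trans
      (abs_integral_le_integral_abs (μ := volume.restrict (Ici 0)) (f := fun t => Y t * G t))
  rw [hsplit, hφ0, hφ'0] at hw
  linarith

theorem integral_rpow_mul_testFunction_le (hY : IsWeakSolution H lam p Y₀ Y₁ Y)
    (hdata : H * Y₀ + Y₁ ≤ 0) (hH : 0 ≤ H) (hlam : 0 < lam) {q : ℝ}
    (hpq : p.HolderConjugate q) {k : ℕ} (hk : (k + 2 : ℝ) ≤ k * p) :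
    ∃ E, ∀ R, 1 ≤ R →
      ∫ t in Ici 0, |Y t| ^ p * testFunction H R k t ≤ E * R ^ (1 - q) := by
  obtain ⟨K, hK0, hK⟩ := cutoffPow.exists_abs_deriv_add_abs_deriv_deriv_le_rpow hpq.pos hk
  obtain ⟨C, hC⟩ := Real.young_inequality_of_nonneg_eps hpq (half_pos hlam)
  refine ⟨2 / lam * (C * ((1 + 2 * H) * K) ^ q), fun R hR => ?_⟩
  have hR0 : 0 < R := one_pos.trans_le hR
  set φ := testFunction H R k
  set I := ∫ t in Ici 0, |Y t| ^ p * φ t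
  set χ := (Icc R (2 * R)).indicator fun _ => C * ((1 + 2 * H) * K / R) ^ q
  have hφ : ContDiff ℝ 2 φ := testFunction.contDiff
  have hφc : HasCompactSupport φ := testFunction.hasCompactSupport hR0.ne'
  have hφI : IntegrableOn (fun t => |Y t| ^ p * φ t) (Ici 0) :=
    hY.integrableOn_rpow_mul hφ.continuous hφc
  have hχI : IntegrableOn χ (Ici 0) :=
    (integrable_indicator_iff measurableSet_Icc).2
      (integrableOn_const measure_Icc_lt_top.ne).restrict
  have hmain : lam * I ≤ lam / 2 * I + R * (C * ((1 + 2 * H) * K / R) ^ q) := by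
    calc lam * I ≤ ∫ t in Ici 0, |Y t| * |deriv (deriv φ) t - H ^ 2 * φ t| :=
          hY.mul_integral_rpow_mul_le hdata hφ hφc testFunction.apply_zero testFunction.deriv_zero
      _ ≤ ∫ t in Ici 0, (lam / 2 * (|Y t| ^ p * φ t) + χ t) :=
          integral_mono_of_nonneg (ae_of_all _ fun t => by positivity) ((hφI.const_mul _).add hχI)
            ((ae_restrict_iff' measurableSet_Ici).2 (ae_of_all _ fun t ht =>
              testFunction.abs_mul_abs_deriv_deriv_sub_sq_mul_le hH hR hpq hK0 hK hC ht (Y t)))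
      _ = lam / 2 * I + R * (C * ((1 + 2 * H) * K / R) ^ q) := by
          rw [integral_add (hφI.const_mul _) hχI, integral_const_mul,
            setIntegral_Ici_indicator_Icc_const hR0.le (by linarith)]
          ring
  have hRpow : R * ((1 + 2 * H) * K / R) ^ q = ((1 + 2 * H) * K) ^ q * R ^ (1 - q) := by
    rw [Real.div_rpow (by positivity) hR0.le, Real.rpow_sub hR0, Real.rpow_one]
    field_simp
  calc I ≤ 2 / lam * (R * (C * ((1 + 2 * H) * K / R) ^ q)) := by
        rw [div_mul_eq_mul_div, le_div_iff₀' hlam]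
        linarith
    _ = 2 / lam * (C * ((1 + 2 * H) * K) ^ q) * R ^ (1 - q) := by
        rw [mul_left_comm R, hRpow]
        ring

end IsWeakSolution

theorem ae_eq_zero_on_Icc_of_integral_le {H p q E : ℝ} {k : ℕ} {Y : ℝ → ℝ} (hp : 0 < p)
    (hq : 1 < q) (hYp : LocallyIntegrableOn (fun t => |Y t| ^ p) (Ici 0))
    (hE : ∀ R, 1 ≤ R → ∫ t in Ici 0, |Y t| ^ p * testFunction H R k t ≤ E * R ^ (1 - q))
    (T : ℝ) : ∀ᵐ t ∂volume.restrict (Icc 0 T), Y t = 0 := by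
  set J := ∫ t in Icc 0 T, |Y t| ^ p * Real.exp (-H * t)
  have hJint : IntegrableOn (fun t => |Y t| ^ p * Real.exp (-H * t)) (Icc 0 T) :=
    (hYp.integrableOn_compact_subset Icc_subset_Ici_self isCompact_Icc).mul_continuousOn
      (by fun_prop) isCompact_Icc
  have hJnonneg : 0 ≤ᵐ[volume.restrict (Icc 0 T)] fun t => |Y t| ^ p * Real.exp (-H * t) :=
    ae_of_all _ fun t => by positivity
  have hJle : ∀ R, max T 1 ≤ R → J ≤ E * R ^ (1 - q) := by
    intro R hR
    have hR0 : 0 < R := one_pos.trans_le (le_max_right _ _ |>.trans hR)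
    have hφ : ContDiff ℝ 2 (testFunction H R k) := testFunction.contDiff
    calc J = ∫ t in Icc 0 T, |Y t| ^ p * testFunction H R k t := by
          refine setIntegral_congr_fun measurableSet_Icc fun t ht => ?_
          rw [testFunction.eq_exp hR0 (abs_le.2 ⟨by linarith [ht.1], ?_⟩)]
          linarith [ht.2, le_max_left T 1]
      _ ≤ ∫ t in Ici 0, |Y t| ^ p * testFunction H R k t :=
          setIntegral_mono_set (hYp.integrableOn_mul_of_hasCompactSupport isClosed_Ici
            hφ.continuous (testFunction.hasCompactSupport hR0.ne'))
            (ae_of_all _ fun t => mul_nonneg (by positivity) (testFunction.nonneg t))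
            Icc_subset_Ici_self.eventuallyLE
      _ ≤ E * R ^ (1 - q) := hE R (le_max_right _ _ |>.trans hR)
  have hlim : Tendsto (fun R : ℝ => E * R ^ (1 - q)) atTop (𝓝 0) := by
    simpa [neg_sub] using (tendsto_rpow_neg_atTop (sub_pos.2 hq)).const_mul E
  have hJ : J = 0 :=
    le_antisymm (ge_of_tendsto hlim (eventually_ge_atTop _ |>.mono hJle))
      (integral_nonneg_of_ae hJnonneg)
  filter_upwards [(setIntegral_eq_zero_iff_of_nonneg_ae hJnonneg hJint).1 hJ] with t ht
  simpa [Real.exp_ne_zero, Real.rpow_eq_zero (abs_nonneg _) hp.ne'] using ht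

/-- Nonexistence of nontrivial global weak solutions of `D_t²Y - H²Y + λ|Y|^p = 0` on `[0,∞)`
in the de Sitter spacetime: if `HY₀ + Y₁ ≤ 0`, any global weak solution vanishes a.e. -/
theorem stmt_11 (H lam p : ℝ) (hH : 0 ≤ H) (hlam : 0 < lam) (hp : 1 < p)
    (Y₀ Y₁ : ℝ) (Y : ℝ → ℝ)
    (hloc : LocallyIntegrableOn Y (Ici (0 : ℝ)))
    (hlocp : LocallyIntegrableOn (fun t => |Y t| ^ p) (Ici (0 : ℝ)))
    (hweak : ∀ φ : ℝ → ℝ, ContDiff ℝ 2 φ → HasCompactSupport φ →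
      -Y₁ * φ 0 + Y₀ * deriv φ 0 +
        ∫ t in Ici (0 : ℝ),
          (Y t * deriv (deriv φ) t - H ^ 2 * Y t * φ t + lam * |Y t| ^ p * φ t) = 0)
    (hdata : H * Y₀ + Y₁ ≤ 0) :
    ∀ᵐ t ∂(volume.restrict (Ici (0 : ℝ))), Y t = 0 := by
  have hY : IsWeakSolution H lam p Y₀ Y₁ Y := ⟨hloc, hlocp, hweak⟩
  have hpq := Real.HolderConjugate.conjExponent hp
  obtain ⟨k, hk⟩ : ∃ k : ℕ, (k + 2 : ℝ) ≤ k * p := by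
    refine ⟨⌈2 / (p - 1)⌉₊, ?_⟩
    have h := (div_le_iff₀ (sub_pos.2 hp)).1 (Nat.le_ceil (2 / (p - 1)))
    linarith
  obtain ⟨E, hE⟩ := hY.integral_rpow_mul_testFunction_le hdata hH hlam hpq hk
  rw [← iUnion_Icc_eq_Ici_self_iff.2 fun x _ => exists_nat_ge x, ae_restrict_iUnion_iff]
  exact fun n => ae_eq_zero_on_Icc_of_integral_le (by linarith) hpq.symm.lt hlocp hE n
end
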